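/- Let k be a field of characteristic different from 2, l a positive integer, n = 2l+1, and r ≥ 2. Then tensor space decomposes as the internal direct sum (k^n)^{⊗r} = ⊕_{ξ ∈ Λ_1(l,r)} N^ξ, and each summand N^ξ is invariant both under the place permutation action of S_r and under the contraction operator C. -/
import Mathlib


open scoped TensorProduct

noncomputable section

variable (k : Type) [Field k]

/-- The `j`-th standard basis vector of `V = k^n`. -/
def stdVec (n : ℕ) (j : Fin n) : Fin n → k := Pi.single j 1

/-- Tensor space `V^{⊗ r}` where `V = k^n`. -/
abbrev TensorSpace (n r : ℕ) := ⨂[k] _ : Fin r, (Fin n → k)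

/-- The simple tensor `e_{i_1} ⊗ ⋯ ⊗ e_{i_r}` attached to a multi-index. -/
def simpleTensor (n r : ℕ) (f : Fin r → Fin n) : TensorSpace k n r :=
  PiTensorProduct.tprod k fun a => stdVec k n (f a)

/-- The weight of a multi-index: its `j`-th entry is the number of positions `a`
with `f a = j`. -/
def weight (n r : ℕ) (f : Fin r → Fin n) : Fin n → ℕ :=
  fun j => (Finset.univ.filter fun a => f a = j).card

/-- `M^λ`: the span of the simple tensors of basis vectors whose multi-index has
weight `λ`. -/
def Mlam (n r : ℕ) (lam : Fin n → ℕ) : Submodule k (TensorSpace k n r) :=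
  Submodule.span k
    {x | ∃ f : Fin r → Fin n, weight n r f = lam ∧ x = simpleTensor k n r f}

/-- The place permutation action of `σ ∈ S_r` on tensor space: the `a`-th tensor
factor of `(v_1 ⊗ ⋯ ⊗ v_r)·σ` is `v_{σ⁻¹ a}`. -/
def placePerm (n r : ℕ) (σ : Equiv.Perm (Fin r)) :
    TensorSpace k n r →ₗ[k] TensorSpace k n r :=
  (PiTensorProduct.reindex k (fun _ : Fin r => Fin n → k) σ).toLinearMap

/-- The contraction operator `C` on `V^{⊗r}` for the symmetric bilinear form
`(e_i, e_j) = δ_{i,j'}` (`i' = n+1−i`, one-based, i.e. `Fin.rev`, zero-based):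
the unique linear map with
`C(v₁ ⊗ v₂ ⊗ w) = (v₁, v₂) · (∑ j, e_j ⊗ e_{j'}) ⊗ w`. -/
def contraction (n r : ℕ) (_hr : 2 ≤ r) :
    TensorSpace k n r →ₗ[k] TensorSpace k n r :=
  PiTensorProduct.lift
    (∑ i : Fin n, ∑ j : Fin n,
      (PiTensorProduct.tprod k).compLinearMap fun a : Fin r =>
        if a.val = 0 then (LinearMap.proj i).smulRight (stdVec k n j)
        else if a.val = 1 then
          (LinearMap.proj (Fin.rev i)).smulRight (stdVec k n (Fin.rev j))
        else LinearMap.id)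

/-- For `n = 2l+1`, the map `π : Λ(n,r) → ℤ^l` given by
`π(λ) = (λ_1 − λ_{1'}, …, λ_l − λ_{l'})`, where `i' = n+1−i` (one-based),
i.e. `i' = 2l−i` in zero-based indexing. -/
def piOdd (l : ℕ) (lam : Fin (2 * l + 1) → ℕ) : Fin l → ℤ :=
  fun i => (lam ⟨i.val, by have := i.isLt; omega⟩ : ℤ)
    - (lam ⟨2 * l - i.val, by have := i.isLt; omega⟩ : ℤ)

/-- `Λ₁(l,r)`: tuples `ξ ∈ ℤ^l` with `|ξ_1| + ⋯ + |ξ_l| = r − s` for some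
integer `s` with `0 ≤ s ≤ r`. -/
def Lambda1 (l r : ℕ) : Set (Fin l → ℤ) :=
  {ξ | ∃ s : ℕ, s ≤ r ∧ ∑ i, |ξ i| = (r : ℤ) - s}

/-- `N^ξ`: the sum of the `M^λ` over the fiber of `π` above `ξ`. -/
def Nxi1 (l r : ℕ) (ξ : Fin l → ℤ) : Submodule k (TensorSpace k (2 * l + 1) r) :=
  ⨆ lam ∈ {lam : Fin (2 * l + 1) → ℕ | (∑ j, lam j = r) ∧ piOdd l lam = ξ},
    Mlam k (2 * l + 1) r lam

section Aux

variable {k}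

lemma stdVec_apply (n : ℕ) (i j : Fin n) :
    stdVec k n i j = if j = i then 1 else 0 := Pi.single_apply i 1 j

lemma tprod_smul_stdVec (n r : ℕ) (c : Fin r → k) (h : Fin r → Fin n) :
    PiTensorProduct.tprod k (fun a => c a • stdVec k n (h a))
      = (∏ a, c a) • simpleTensor k n r h :=
  MultilinearMap.map_smul_univ _ c _

lemma prod_stdVec_delta (n r : ℕ) (f g : Fin r → Fin n) :
    (∏ a, stdVec k n (g a) (f a)) = if f = g then (1 : k) else 0 := by
  classical
  simp only [stdVec_apply]
  rw [Fintype.prod_boole]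
  simp [funext_iff]

lemma sum_weight (n r : ℕ) (f : Fin r → Fin n) : ∑ j, weight n r f j = r := by
  classical
  have h := Finset.card_eq_sum_card_fiberwise
    (f := f) (s := Finset.univ) (t := Finset.univ) (fun x _ => Finset.mem_univ _)
  simpa [weight, Finset.card_univ] using h.symm

lemma weight_comp_equiv (n r : ℕ) (f : Fin r → Fin n) (σ : Equiv.Perm (Fin r)) :
    weight n r (fun a => f (σ a)) = weight n r f := by
  classical
  funext j
  show (Finset.univ.filter fun a => f (σ a) = j).card
      = (Finset.univ.filter fun a => f a = j).card
  rw [show (Finset.univ.filter fun a => f (σ a) = j)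
      = (Finset.univ.filter fun a => f a = j).map σ.symm.toEmbedding by
    ext a
    simp only [Finset.mem_map, Finset.mem_filter, Finset.mem_univ, true_and,
      Equiv.coe_toEmbedding, Equiv.symm_apply_eq]
    constructor
    · intro h; exact ⟨σ a, h, rfl⟩
    · rintro ⟨b, hb, rfl⟩; simpa using hb]
  rw [Finset.card_map]

lemma abs_cast_sub_le (p q : ℕ) : |(p : ℤ) - q| ≤ (p : ℤ) + q := by
  rw [abs_le]; constructor <;> omega

def emb1 (l : ℕ) : Fin l ↪ Fin (2 * l + 1) :=
  ⟨fun i => ⟨i.val, by have := i.isLt; omega⟩,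
   fun a b h => by
     simp only [Fin.mk.injEq] at h
     exact Fin.ext h⟩

def emb2 (l : ℕ) : Fin l ↪ Fin (2 * l + 1) :=
  ⟨fun i => ⟨2 * l - i.val, by have := i.isLt; omega⟩,
   fun a b h => by
     simp only [Fin.mk.injEq] at h
     have := a.isLt; have := b.isLt
     exact Fin.ext (by omega)⟩

@[simp] lemma emb1_val (l : ℕ) (i : Fin l) : ((emb1 l i : Fin (2 * l + 1)) : ℕ) = i.val := rfl

@[simp] lemma emb2_val (l : ℕ) (i : Fin l) :
    ((emb2 l i : Fin (2 * l + 1)) : ℕ) = 2 * l - i.val := rfl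

lemma cls_mem_Lambda1 (l r : ℕ) (f : Fin r → Fin (2 * l + 1)) :
    piOdd l (weight (2 * l + 1) r f) ∈ Lambda1 l r := by
  classical
  set lam := weight (2 * l + 1) r f with hlam
  have hsum : ∑ j, lam j = r := sum_weight _ _ f
  have hdisj : Disjoint (Finset.univ.map (emb1 l)) (Finset.univ.map (emb2 l)) := by
    rw [Finset.disjoint_left]
    rintro x hx1 hx2
    rw [Finset.mem_map] at hx1 hx2
    obtain ⟨a, -, ha⟩ := hx1
    obtain ⟨b, -, hb⟩ := hx2
    have h1 := congrArg Fin.val ha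
    have h2 := congrArg Fin.val hb
    rw [emb1_val] at h1
    rw [emb2_val] at h2
    have := a.isLt; have := b.isLt
    omega
  have key : ∑ i : Fin l, lam (emb1 l i) + ∑ i : Fin l, lam (emb2 l i) ≤ r := by
    rw [← Finset.sum_map Finset.univ (emb1 l) lam, ← Finset.sum_map Finset.univ (emb2 l) lam,
        ← Finset.sum_union hdisj, ← hsum]
    exact Finset.sum_le_sum_of_subset (Finset.subset_univ _)
  have hbound : ∑ i : Fin l, |piOdd l lam i| ≤ (r : ℤ) := by
    have h1 : ∑ i : Fin l, |piOdd l lam i|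
        ≤ ∑ i : Fin l, ((lam (emb1 l i) : ℤ) + (lam (emb2 l i) : ℤ)) :=
      Finset.sum_le_sum fun i _ => abs_cast_sub_le _ _
    refine h1.trans ?_
    rw [Finset.sum_add_distrib]
    exact_mod_cast key
  have hnonneg : (0 : ℤ) ≤ ∑ i : Fin l, |piOdd l lam i| :=
    Finset.sum_nonneg fun i _ => abs_nonneg _
  exact ⟨r - (∑ i : Fin l, |piOdd l lam i|).toNat, by omega, by omega⟩

lemma Nxi_eq_span (l r : ℕ) (ξ : Fin l → ℤ) :
    Nxi1 k l r ξ = Submodule.span k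
      {x | ∃ f : Fin r → Fin (2 * l + 1),
        piOdd l (weight (2 * l + 1) r f) = ξ ∧ x = simpleTensor k (2 * l + 1) r f} := by
  apply le_antisymm
  · refine iSup₂_le fun lam hlam => ?_
    rw [Mlam, Submodule.span_le]
    rintro x ⟨f, hw, rfl⟩
    exact Submodule.subset_span ⟨f, by rw [hw]; exact hlam.2, rfl⟩
  · rw [Submodule.span_le]
    rintro x ⟨f, hcls, rfl⟩
    refine Submodule.mem_iSup_of_mem (weight (2 * l + 1) r f) ?_
    refine Submodule.mem_iSup_of_mem ⟨sum_weight _ _ f, hcls⟩ ?_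
    exact Submodule.subset_span ⟨f, rfl, rfl⟩

end Aux
section Aux2

def projXi (l r : ℕ) (ξ : Fin l → ℤ) :
    TensorSpace k (2 * l + 1) r →ₗ[k] TensorSpace k (2 * l + 1) r :=
  PiTensorProduct.lift
    (∑ f ∈ Finset.univ.filter
        (fun f : Fin r → Fin (2 * l + 1) => piOdd l (weight (2 * l + 1) r f) = ξ),
      (PiTensorProduct.tprod k).compLinearMap fun a =>
        (LinearMap.proj (f a)).smulRight (stdVec k (2 * l + 1) (f a)))

variable {k}

lemma projXi_simpleTensor (l r : ℕ) (ξ : Fin l → ℤ) (f : Fin r → Fin (2 * l + 1)) :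
    projXi k l r ξ (simpleTensor k (2 * l + 1) r f)
      = if piOdd l (weight (2 * l + 1) r f) = ξ then simpleTensor k (2 * l + 1) r f else 0 := by
  classical
  unfold projXi
  rw [show simpleTensor k (2 * l + 1) r f
      = PiTensorProduct.tprod k (fun a => stdVec k (2 * l + 1) (f a)) from rfl]
  rw [PiTensorProduct.lift.tprod, MultilinearMap.sum_apply]
  have hterm : ∀ g : Fin r → Fin (2 * l + 1),
      ((PiTensorProduct.tprod k).compLinearMap fun a =>
        (LinearMap.proj (g a)).smulRight (stdVec k (2 * l + 1) (g a)))
        (fun a => stdVec k (2 * l + 1) (f a))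
      = if f = g then simpleTensor k (2 * l + 1) r g else 0 := by
    intro g
    rw [MultilinearMap.compLinearMap_apply]
    have harg : (fun a => ((LinearMap.proj (R := k) (φ := fun _ : Fin (2 * l + 1) => k)
          (g a)).smulRight
          (stdVec k (2 * l + 1) (g a))) (stdVec k (2 * l + 1) (f a)))
        = fun a => (stdVec k (2 * l + 1) (f a) (g a)) • stdVec k (2 * l + 1) (g a) := by
      funext a
      simp [LinearMap.smulRight_apply]
    rw [harg, tprod_smul_stdVec, prod_stdVec_delta]
    split_ifs with h1 h2
    · exact one_smul _ _
    · exact absurd h1.symm h2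
    · exact absurd ‹f = g›.symm h1
    · exact zero_smul _ _
  simp_rw [hterm]
  rw [Finset.sum_ite_eq]
  simp only [Finset.mem_filter, Finset.mem_univ, true_and]
  rfl

lemma top_le_iSup_Nxi (l r : ℕ) :
    (⊤ : Submodule k (TensorSpace k (2 * l + 1) r)) ≤
      ⨆ ξ : {ξ : Fin l → ℤ // ξ ∈ Lambda1 l r}, Nxi1 k l r ξ.val := by
  classical
  rw [← PiTensorProduct.span_tprod_eq_top, Submodule.span_le]
  rintro x ⟨m, rfl⟩
  have hm : (PiTensorProduct.tprod k) m
      = ∑ g : Fin r → Fin (2 * l + 1),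
          (∏ a, m a (g a)) • simpleTensor k (2 * l + 1) r g := by
    have hdecomp : m = fun a => ∑ j, m a j • stdVec k (2 * l + 1) j := by
      funext a b
      simp [stdVec, Pi.single_apply, Finset.sum_apply, mul_ite]
    conv_lhs => rw [hdecomp]
    rw [MultilinearMap.map_sum]
    exact Finset.sum_congr rfl fun g _ => tprod_smul_stdVec _ _ _ _
  rw [hm]
  refine Submodule.sum_mem _ fun g _ => Submodule.smul_mem _ _ ?_
  have hmem : simpleTensor k (2 * l + 1) r g
      ∈ Nxi1 k l r (piOdd l (weight (2 * l + 1) r g)) := by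
    rw [Nxi_eq_span]
    exact Submodule.subset_span ⟨g, rfl, rfl⟩
  exact Submodule.mem_iSup_of_mem ⟨_, cls_mem_Lambda1 l r g⟩ hmem

lemma nxi_indep (l r : ℕ) :
    iSupIndep (fun ξ : {ξ : Fin l → ℤ // ξ ∈ Lambda1 l r} => Nxi1 k l r ξ.val) := by
  classical
  intro ξ
  rw [disjoint_iff_inf_le]
  intro v hv
  rw [Submodule.mem_inf] at hv
  obtain ⟨hv1, hv2⟩ := hv
  have h1 : projXi k l r ξ.val v = v := by
    have hle : Nxi1 k l r ξ.val
        ≤ LinearMap.ker (projXi k l r ξ.val - LinearMap.id) := by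
      rw [Nxi_eq_span, Submodule.span_le]
      rintro x ⟨f, hf, rfl⟩
      simp [LinearMap.mem_ker, LinearMap.sub_apply, projXi_simpleTensor, hf]
    have h := hle hv1
    rw [LinearMap.mem_ker, LinearMap.sub_apply, LinearMap.id_apply, sub_eq_zero] at h
    exact h
  have h2 : projXi k l r ξ.val v = 0 := by
    have hle : (⨆ η, ⨆ _ : η ≠ ξ,
          Nxi1 k l r (η : {ξ : Fin l → ℤ // ξ ∈ Lambda1 l r}).val)
        ≤ LinearMap.ker (projXi k l r ξ.val) := by
      refine iSup₂_le fun η hη => ?_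
      rw [Nxi_eq_span, Submodule.span_le]
      rintro x ⟨f, hf, rfl⟩
      have hne : piOdd l (weight (2 * l + 1) r f) ≠ ξ.val := by
        rw [hf]; exact fun h => hη (Subtype.ext h)
      simp [LinearMap.mem_ker, projXi_simpleTensor, hne]
    exact LinearMap.mem_ker.mp (hle hv2)
  rw [Submodule.mem_bot, ← h1, h2]

end Aux2
section Aux3

variable {k}

lemma contraction_simpleTensor (n r : ℕ) (hr : 2 ≤ r) (f : Fin r → Fin n) :
    contraction k n r hr (simpleTensor k n r f)
      = (if Fin.rev (f ⟨0, by omega⟩) = f ⟨1, by omega⟩ then (1 : k) else 0) •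
          ∑ j : Fin n, simpleTensor k n r
            (fun a => if a.val = 0 then j else if a.val = 1 then Fin.rev j else f a) := by
  classical
  have h0r : 0 < r := by omega
  have h1r : 1 < r := by omega
  have ha01 : (⟨0, by omega⟩ : Fin r) ≠ (⟨1, by omega⟩ : Fin r) := by
    intro h; exact absurd (congrArg Fin.val h) (by norm_num)
  unfold contraction
  rw [show simpleTensor k n r f
      = PiTensorProduct.tprod k (fun a => stdVec k n (f a)) from rfl]
  rw [PiTensorProduct.lift.tprod]
  simp_rw [MultilinearMap.sum_apply]
  have hterm : ∀ i j : Fin n,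
      ((PiTensorProduct.tprod k).compLinearMap fun a : Fin r =>
        if a.val = 0 then (LinearMap.proj i).smulRight (stdVec k n j)
        else if a.val = 1 then
          (LinearMap.proj (Fin.rev i)).smulRight (stdVec k n (Fin.rev j))
        else LinearMap.id)
        (fun a => stdVec k n (f a))
      = ((if i = f ⟨0, by omega⟩ then (1:k) else 0)
          * (if Fin.rev i = f ⟨1, by omega⟩ then (1:k) else 0)) •
        simpleTensor k n r
          (fun a => if a.val = 0 then j else if a.val = 1 then Fin.rev j else f a) := by
    intro i j
    rw [MultilinearMap.compLinearMap_apply]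
    have harg : (fun a => (if a.val = 0 then (LinearMap.proj i).smulRight (stdVec k n j)
        else if a.val = 1 then
          (LinearMap.proj (Fin.rev i)).smulRight (stdVec k n (Fin.rev j))
        else LinearMap.id : (Fin n → k) →ₗ[k] (Fin n → k)) (stdVec k n (f a)))
        = fun a => (if a.val = 0 then stdVec k n (f ⟨0, by omega⟩) i
            else if a.val = 1 then stdVec k n (f ⟨1, by omega⟩) (Fin.rev i) else 1) •
            stdVec k n (if a.val = 0 then j else if a.val = 1 then Fin.rev j else f a) := by
      funext a
      by_cases h0 : a.val = 0
      · have ha : a = ⟨0, h0r⟩ := Fin.ext h0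
        subst ha
        simp [LinearMap.smulRight_apply]
      · by_cases h1 : a.val = 1
        · have ha : a = ⟨1, h1r⟩ := Fin.ext h1
          subst ha
          simp [LinearMap.smulRight_apply]
        · simp [h0, h1]
    rw [harg, tprod_smul_stdVec]
    congr 1
    rw [← Finset.prod_subset
        (Finset.subset_univ ({⟨0, h0r⟩, ⟨1, h1r⟩} : Finset (Fin r)))
        (fun x _ hx => by
          rw [Finset.mem_insert, Finset.mem_singleton] at hx
          push_neg at hx
          have hx0 : x.val ≠ 0 := fun h => hx.1 (Fin.ext h)
          have hx1 : x.val ≠ 1 := fun h => hx.2 (Fin.ext h)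
          simp [hx0, hx1])]
    rw [Finset.prod_pair ha01]
    simp [stdVec_apply]
  simp_rw [hterm]
  rw [Finset.sum_comm]
  have hsum : ∀ j : Fin n,
      ∑ i : Fin n, ((if i = f ⟨0, by omega⟩ then (1:k) else 0)
          * (if Fin.rev i = f ⟨1, by omega⟩ then (1:k) else 0)) •
        simpleTensor k n r
          (fun a => if a.val = 0 then j else if a.val = 1 then Fin.rev j else f a)
      = (if Fin.rev (f ⟨0, by omega⟩) = f ⟨1, by omega⟩ then (1:k) else 0) •
        simpleTensor k n r
          (fun a => if a.val = 0 then j else if a.val = 1 then Fin.rev j else f a) := by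
    intro j
    rw [← Finset.sum_smul]
    congr 1
    rw [show (fun i : Fin n => (if i = f ⟨0, by omega⟩ then (1:k) else 0)
        * (if Fin.rev i = f ⟨1, by omega⟩ then (1:k) else 0))
      = fun i : Fin n => if i = f ⟨0, by omega⟩ then
          (if Fin.rev i = f ⟨1, by omega⟩ then (1:k) else 0) else 0 by
      funext i; split_ifs <;> ring]
    rw [Fintype.sum_ite_eq']
  simp_rw [hsum]
  rw [← Finset.smul_sum]

end Aux3
section Aux4

variable {k}

lemma cls_contraction_update (l r : ℕ) (hr : 2 ≤ r) (f : Fin r → Fin (2 * l + 1))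
    (j : Fin (2 * l + 1))
    (hf : Fin.rev (f ⟨0, by omega⟩) = f ⟨1, by omega⟩) :
    piOdd l (weight (2 * l + 1) r
      (fun a => if a.val = 0 then j else if a.val = 1 then Fin.rev j else f a))
      = piOdd l (weight (2 * l + 1) r f) := by
  classical
  have h0r : 0 < r := by omega
  have h1r : 1 < r := by omega
  set a0 : Fin r := ⟨0, h0r⟩ with ha0
  set a1 : Fin r := ⟨1, h1r⟩ with ha1
  have ha01 : a0 ≠ a1 := by
    intro h; exact absurd (congrArg Fin.val h) (by norm_num [ha0, ha1])
  set g : Fin r → Fin (2 * l + 1) :=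
    fun a => if a.val = 0 then j else if a.val = 1 then Fin.rev j else f a with hg
  have hga0 : g a0 = j := by simp [hg, ha0]
  have hga1 : g a1 = Fin.rev j := by simp [hg, ha1]
  have hgelse : ∀ a, a ≠ a0 → a ≠ a1 → g a = f a := by
    intro a hA0 hA1
    have hv0 : a.val ≠ 0 := fun h => hA0 (Fin.ext h)
    have hv1 : a.val ≠ 1 := fun h => hA1 (Fin.ext h)
    simp [hg, hv0, hv1]
  have expand : ∀ (h : Fin r → Fin (2 * l + 1)) (m : Fin (2 * l + 1)),
      (weight (2 * l + 1) r h m : ℤ) = ∑ a : Fin r, (if h a = m then 1 else 0) := by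
    intro h m
    show ((Finset.univ.filter fun a => h a = m).card : ℤ) = _
    rw [Finset.card_filter]
    push_cast
    rfl
  have hW : ∀ m : Fin (2 * l + 1),
      (weight (2 * l + 1) r g m : ℤ) = weight (2 * l + 1) r f m
        + ((if g a0 = m then 1 else 0) - (if f a0 = m then 1 else 0))
        + ((if g a1 = m then 1 else 0) - (if f a1 = m then 1 else 0)) := by
    intro m
    have hdiff : ∑ a : Fin r, ((if g a = m then (1:ℤ) else 0) - (if f a = m then 1 else 0))
        = ((if g a0 = m then 1 else 0) - (if f a0 = m then 1 else 0))
          + ((if g a1 = m then 1 else 0) - (if f a1 = m then 1 else 0)) := by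
      have hsub : ∑ a ∈ ({a0, a1} : Finset (Fin r)),
            ((if g a = m then (1:ℤ) else 0) - (if f a = m then 1 else 0))
          = ∑ a : Fin r, ((if g a = m then (1:ℤ) else 0) - (if f a = m then 1 else 0)) := by
        refine Finset.sum_subset (Finset.subset_univ _) (fun x _ hx => ?_)
        rw [Finset.mem_insert, Finset.mem_singleton] at hx
        push_neg at hx
        rw [hgelse x hx.1 hx.2]
        ring
      rw [← hsub, Finset.sum_pair ha01]
    rw [Finset.sum_sub_distrib] at hdiff
    rw [expand g m, expand f m]
    linarith [hdiff]
  have main : ∀ m m' : Fin (2 * l + 1), m' = Fin.rev m →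
      (weight (2 * l + 1) r g m : ℤ) - weight (2 * l + 1) r g m'
        = (weight (2 * l + 1) r f m : ℤ) - weight (2 * l + 1) r f m' := by
    intro m m' hmm'
    have e1 : ∀ x : Fin (2 * l + 1), (Fin.rev x = m') = (x = m) := by
      intro x
      refine propext ⟨fun h => ?_, fun h => by rw [hmm', h]⟩
      rw [hmm'] at h
      exact Fin.rev_injective h
    have e2 : ∀ x : Fin (2 * l + 1), (Fin.rev x = m) = (x = m') := by
      intro x
      exact propext ⟨fun h => by rw [hmm', ← h, Fin.rev_rev],
        fun h => by rw [h, hmm', Fin.rev_rev]⟩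
    have hfa1 : f a1 = Fin.rev (f a0) := hf.symm
    rw [hW m, hW m', hga0, hga1, hfa1]
    simp only [e1, e2]
    ring
  have hrevmk : ∀ (i : Fin l),
      (⟨2 * l - i.val, by have := i.isLt; omega⟩ : Fin (2 * l + 1))
        = Fin.rev ⟨i.val, by have := i.isLt; omega⟩ := by
    intro i
    have hi := i.isLt
    apply Fin.ext
    simp only [Fin.val_rev]
    show 2 * l - i.val = 2 * l + 1 - (i.val + 1)
    omega
  funext i
  show (weight (2 * l + 1) r g ⟨i.val, _⟩ : ℤ) - weight (2 * l + 1) r g ⟨2 * l - i.val, _⟩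
      = (weight (2 * l + 1) r f ⟨i.val, _⟩ : ℤ) - weight (2 * l + 1) r f ⟨2 * l - i.val, _⟩
  exact main _ _ (hrevmk i)

end Aux4

/-- for `char k ≠ 2` and `n = 2l+1`, tensor space is the internal
direct sum of the `N^ξ`, `ξ ∈ Λ₁(l,r)`, and each `N^ξ` is invariant under the
place permutation action of `S_r` and under the contraction operator `C`. -/
theorem tensorSpace_isInternal_Nxi_odd_orthogonal (h2 : (2 : k) ≠ 0)
    (l r : ℕ) (hl : 0 < l) (hr : 2 ≤ r) :
    DirectSum.IsInternal
        (fun ξ : {ξ : Fin l → ℤ // ξ ∈ Lambda1 l r} => Nxi1 k l r ξ.val)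
      ∧ (∀ ξ ∈ Lambda1 l r, ∀ σ : Equiv.Perm (Fin r),
          ∀ v ∈ Nxi1 k l r ξ, placePerm k (2 * l + 1) r σ v ∈ Nxi1 k l r ξ)
      ∧ ∀ ξ ∈ Lambda1 l r,
          ∀ v ∈ Nxi1 k l r ξ,
            contraction k (2 * l + 1) r hr v ∈ Nxi1 k l r ξ := by
  classical
  refine ⟨?_, ?_, ?_⟩
  · rw [DirectSum.isInternal_submodule_iff_iSupIndep_and_iSup_eq_top]
    exact ⟨nxi_indep l r, le_antisymm le_top (top_le_iSup_Nxi l r)⟩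
  · intro ξ hξ σ v hv
    have hle : Nxi1 k l r ξ
        ≤ Submodule.comap (placePerm k (2 * l + 1) r σ) (Nxi1 k l r ξ) := by
      nth_rewrite 1 [Nxi_eq_span]
      rw [Submodule.span_le]
      rintro x ⟨f, hf, rfl⟩
      simp only [Set.mem_setOf_eq, SetLike.mem_coe, Submodule.mem_comap]
      have hT : placePerm k (2 * l + 1) r σ (simpleTensor k (2 * l + 1) r f)
          = simpleTensor k (2 * l + 1) r (fun a => f (σ.symm a)) := by
        show (PiTensorProduct.reindex k (fun _ : Fin r => Fin (2 * l + 1) → k) σ)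
            (PiTensorProduct.tprod k fun a => stdVec k (2 * l + 1) (f a))
          = PiTensorProduct.tprod k fun a => stdVec k (2 * l + 1) (f (σ.symm a))
        rw [PiTensorProduct.reindex_tprod]
      rw [hT, Nxi_eq_span]
      refine Submodule.subset_span ⟨fun a => f (σ.symm a), ?_, rfl⟩
      rw [weight_comp_equiv (2 * l + 1) r f σ.symm]
      exact hf
    exact hle hv
  · intro ξ hξ v hv
    have hle : Nxi1 k l r ξ
        ≤ Submodule.comap (contraction k (2 * l + 1) r hr) (Nxi1 k l r ξ) := by
      nth_rewrite 1 [Nxi_eq_span]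
      rw [Submodule.span_le]
      rintro x ⟨f, hf, rfl⟩
      simp only [Set.mem_setOf_eq, SetLike.mem_coe, Submodule.mem_comap]
      rw [contraction_simpleTensor]
      split_ifs with hc
      · rw [one_smul]
        refine Submodule.sum_mem _ fun j _ => ?_
        rw [Nxi_eq_span]
        refine Submodule.subset_span ⟨_, ?_, rfl⟩
        rw [cls_contraction_update l r hr f j hc]
        exact hf
      · rw [zero_smul]
        exact Submodule.zero_mem _
    exact hle hv

end
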